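/- arXiv:2304.07012 — 2 statements merged into one kernel-verified Lean document; each statement's English description precedes it below -/
import Mathlib

section
/- Let c_1, c_2 : [0,1] → U be continuous piecewise C^∞ paths with c_1(1) = c_2(0), and let c_2 * c_1 : [0,1] → U be their concatenation, defined by (c_2*c_1)(s) = c_1(2s) for 0 ≤ s ≤ 1/2 and (c_2*c_1)(s) = c_2(2s−1) for 1/2 ≤ s ≤ 1. Then the parallel transport along the composed path is the product of the parallel transports: W^{(c_2*c_1)}_{10} = W^{(c_2)}_{10} · W^{(c_1)}_{10} in 𝒜[[λ]]. -/
open Set Filter MeasureTheory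

universe u

/-- Piecewise `C^∞` functions on `[a,b]` with singular set `D`: smooth off `D`,
and all one-sided limits of all iterated derivatives exist at the points of `D`. -/
def PWSm (a b : ℝ) (D : Set ℝ) {E : Type*} [NormedAddCommGroup E] [NormedSpace ℝ E]
    (f : ℝ → E) : Prop :=
  ContDiffOn ℝ (⊤ : ℕ∞) f (Set.Icc a b \ D) ∧
  ∀ r : ℕ, ∀ d ∈ D,
    (∃ L : E, Filter.Tendsto (iteratedDerivWithin r f (Set.Icc a b \ D))
      (nhdsWithin d ((Set.Icc a b \ D) ∩ Set.Iio d)) (nhds L)) ∧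
    (∃ L : E, Filter.Tendsto (iteratedDerivWithin r f (Set.Icc a b \ D))
      (nhdsWithin d ((Set.Icc a b \ D) ∩ Set.Ioi d)) (nhds L))

section

variable {𝒜 : Type u} [Ring 𝒜] [Algebra ℂ 𝒜]

/-- An element of `C^∞_D([a,b],ℂ) ⊗ 𝒜`: a finite sum of piecewise smooth complex
functions tensored with algebra elements. -/
def PWTensor (a b : ℝ) (D : Set ℝ) (g : ℝ → 𝒜) : Prop :=
  ∃ (n : ℕ) (f : Fin n → ℝ → ℂ) (v : Fin n → 𝒜),
    (∀ i, PWSm a b D (f i)) ∧ ∀ s, g s = ∑ i, f i s • v i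

/-- An element of `C^∞_D([a,b],ℂ)^0 ⊗ 𝒜`: as `PWTensor` but with the complex
coefficient functions extending continuously to `[a,b]`. -/
def PWTensor0 (a b : ℝ) (D : Set ℝ) (g : ℝ → 𝒜) : Prop :=
  ∃ (n : ℕ) (f : Fin n → ℝ → ℂ) (v : Fin n → 𝒜),
    (∀ i, PWSm a b D (f i) ∧ ContinuousOn (f i) (Set.Icc a b)) ∧
    ∀ s, g s = ∑ i, f i s • v i

/-- `G` is (on `[a,b]`) the primitive of `g` normalized at `α`, computed via any finite
tensor representation of `g`. -/
def HasPrimitiveOn (a b α : ℝ) (g G : ℝ → 𝒜) : Prop :=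
  ∃ (n : ℕ) (f : Fin n → ℝ → ℂ) (v : Fin n → 𝒜),
    (∀ i, ∀ s ∈ Set.Icc a b, IntervalIntegrable (f i) MeasureTheory.volume α s) ∧
    (∀ s, g s = ∑ i, f i s • v i) ∧
    ∀ s ∈ Set.Icc a b, G s = ∑ i, (∫ t in α..s, f i t) • v i

/-- `ω` is a (continuous, piecewise smooth) solution of the formal linear ODE
`dω/ds = λ Y ω`, `ω(α) = init`, written coefficientwise in `λ` in integral form:
`ω = init + λ I_α(Y ω)`. -/
def IsFundSol (a b α : ℝ) (D : Set ℝ) (Y : ℕ → ℝ → 𝒜) (init : ℕ → 𝒜)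
    (ω : ℕ → ℝ → 𝒜) : Prop :=
  (∀ r, PWTensor0 a b D (ω r)) ∧
  (∀ s ∈ Set.Icc a b, ω 0 s = init 0) ∧
  ∀ r : ℕ, ∃ G : ℝ → 𝒜,
    HasPrimitiveOn a b α (fun t => ∑ u ∈ Finset.range (r + 1), Y u t * ω (r - u) t) G ∧
    ∀ s ∈ Set.Icc a b, ω (r + 1) s = init (r + 1) + G s

end

section

variable {𝒜 : Type u} [Ring 𝒜] [Algebra ℂ 𝒜] {N : ℕ}

/-- The value of `ω` at the point `s`, as a formal power series in `𝒜[[λ]]`. -/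
noncomputable def seriesAt (ω : ℕ → ℝ → 𝒜) (s : ℝ) : PowerSeries 𝒜 :=
  PowerSeries.mk fun r => ω r s

/-- The unit `1 ∈ 𝒜[[λ]]` as a sequence of coefficients. -/
def onePS : ℕ → 𝒜 := fun r => if r = 0 then (1 : 𝒜) else 0

/-- A finite sum of smooth complex functions on `U` tensored with elements of `𝒜`. -/
def ConnTensor (U : Set (Fin N → ℝ)) (g : (Fin N → ℝ) → 𝒜) : Prop :=
  ∃ (n : ℕ) (f : Fin n → (Fin N → ℝ) → ℂ) (v : Fin n → 𝒜),
    (∀ i, ContDiffOn ℝ (⊤ : ℕ∞) (f i) U) ∧ ∀ x, g x = ∑ i, f i x • v i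

/-- A formal connection `Γ` on `U ⊆ ℝ^N`: the components `Γ_i` are elements of
`(C^∞(U,ℂ) ⊗ 𝒜)[[λ]]`. -/
def IsFormalConn (U : Set (Fin N → ℝ)) (Γ : Fin N → ℕ → (Fin N → ℝ) → 𝒜) : Prop :=
  ∀ i r, ConnTensor U (Γ i r)

/-- A continuous piecewise `C^∞` path with singular set `D`. -/
def PWPath (a b : ℝ) (D : Set ℝ) (c : ℝ → Fin N → ℝ) : Prop :=
  ContinuousOn c (Set.Icc a b) ∧ ∀ i, PWSm a b D (fun s => c s i)

/-- `Γ^{(c)} = Σ_i (Γ_i ∘ c) dc_i/ds`, the coefficient of the formal linear ODE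
associated to the connection `Γ` and the path `c`. -/
noncomputable def pathField (Γ : Fin N → ℕ → (Fin N → ℝ) → 𝒜) (c : ℝ → Fin N → ℝ)
    (r : ℕ) (s : ℝ) : 𝒜 :=
  ∑ i, ((deriv (fun t => c t i) s : ℝ) : ℂ) • Γ i r (c s)

end


section AuxStatement8

lemma aux_tri {M : Type*} [AddCommMonoid M] (n : ℕ) (F : ℕ → ℕ → M) :
    ∑ u ∈ Finset.range (n+1), ∑ v ∈ Finset.range (n+1-u), F u v
      = ∑ w ∈ Finset.range (n+1), ∑ u ∈ Finset.range (w+1), F u (w-u) := by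
  have h1 : ∀ u, ∑ v ∈ Finset.range (n+1-u), F u v
      = ∑ w ∈ Finset.Ico u (n+1), F u (w-u) := by
    intro u
    rw [Finset.sum_Ico_eq_sum_range]
    exact Finset.sum_congr rfl fun k _ => by congr 1; omega
  simp only [h1]
  rw [Finset.range_eq_Ico, Finset.sum_Ico_Ico_comm 0 (n+1) (fun i j => F i (j - i))]
  simp only [Finset.range_eq_Ico]

universe v

lemma aux_lemA {𝒜 : Type v} [Ring 𝒜] [Algebra ℂ 𝒜] {a b α : ℝ} {g G : ℝ → 𝒜}
    (h : HasPrimitiveOn a b α g G) (φ : Module.Dual ℂ 𝒜) {s : ℝ} (hs : s ∈ Set.Icc a b) :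
    IntervalIntegrable (fun t => φ (g t)) volume α s ∧
      φ (G s) = ∫ t in α..s, φ (g t) := by
  obtain ⟨n, f, v, hInt, hg, hG⟩ := h
  have hrep : ∀ t, φ (g t) = ∑ i, f i t * φ (v i) := by
    intro t
    rw [hg t]
    simp only [_root_.map_sum, _root_.map_smul, smul_eq_mul]
  have hint : IntervalIntegrable (fun t => ∑ i, f i t * φ (v i)) volume α s := by
    have h2 : IntervalIntegrable (∑ i, fun t => f i t * φ (v i)) volume α s :=
      IntervalIntegrable.sum _ fun i _ => (hInt i s hs).mul_const _
    simpa [Finset.sum_fn] using h2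
  constructor
  · exact hint.congr (fun t _ => (hrep t).symm)
  · rw [hG s hs, _root_.map_sum]
    have : ∀ i : Fin n, φ ((∫ t in α..s, f i t) • v i) = ∫ t in α..s, f i t * φ (v i) := by
      intro i
      rw [_root_.map_smul, smul_eq_mul, ← intervalIntegral.integral_mul_const]
    rw [Finset.sum_congr rfl fun i _ => this i,
      ← intervalIntegral.integral_finset_sum (fun i _ => (hInt i s hs).mul_const _)]
    exact intervalIntegral.integral_congr fun t _ => (hrep t).symm

lemma aux_sep {𝒜 : Type v} [Ring 𝒜] [Algebra ℂ 𝒜] {x y : 𝒜}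
    (h : ∀ φ : Module.Dual ℂ 𝒜, φ x = φ y) : x = y := by
  rw [← sub_eq_zero, ← Module.forall_dual_apply_eq_zero_iff ℂ (x - y)]
  intro φ; rw [map_sub, h, sub_self]

end AuxStatement8

/-- The parallel transport along the concatenation `c₂ * c₁` of two
continuous piecewise `C^∞` paths with `c₁(1) = c₂(0)` is the product of the parallel
transports: `W^{(c₂*c₁)}_{10} = W^{(c₂)}_{10} · W^{(c₁)}_{10}` in `𝒜[[λ]]`. -/

theorem statement8 {𝒜 : Type u} [Ring 𝒜] [Algebra ℂ 𝒜] {N : ℕ}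
    (U : Set (Fin N → ℝ)) (hUopen : IsOpen U) (hUne : U.Nonempty)
    (Γ : Fin N → ℕ → (Fin N → ℝ) → 𝒜) (hΓ : IsFormalConn U Γ)
    (D₁ D₂ : Set ℝ) (hD₁fin : D₁.Finite) (hD₂fin : D₂.Finite)
    (h0D₁ : (0 : ℝ) ∈ D₁) (h1D₁ : (1 : ℝ) ∈ D₁) (hD₁sub : D₁ ⊆ Set.Icc 0 1)
    (h0D₂ : (0 : ℝ) ∈ D₂) (h1D₂ : (1 : ℝ) ∈ D₂) (hD₂sub : D₂ ⊆ Set.Icc 0 1)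
    (c₁ c₂ : ℝ → Fin N → ℝ)
    (hc₁ : PWPath 0 1 D₁ c₁) (hc₂ : PWPath 0 1 D₂ c₂)
    (hc₁U : Set.MapsTo c₁ (Set.Icc 0 1) U) (hc₂U : Set.MapsTo c₂ (Set.Icc 0 1) U)
    (hglue : c₁ 1 = c₂ 0)
    (W₁ W₂ W₁₂ : ℕ → ℝ → 𝒜)
    (hW₁ : IsFundSol 0 1 0 D₁ (pathField Γ c₁) onePS W₁)
    (hW₂ : IsFundSol 0 1 0 D₂ (pathField Γ c₂) onePS W₂)
    (hW₁₂ : IsFundSol 0 1 0 ((fun x : ℝ => x / 2) '' D₁ ∪ (fun x : ℝ => x / 2 + 1 / 2) '' D₂)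
      (pathField Γ (fun s => if s ≤ 1 / 2 then c₁ (2 * s) else c₂ (2 * s - 1)))
      onePS W₁₂) :
    seriesAt W₁₂ 1 = seriesAt W₂ 1 * seriesAt W₁ 1 := by
  classical
  obtain ⟨-, hW₁₂0, hW₁₂rec⟩ := hW₁₂
  obtain ⟨-, hW₁0, hW₁rec⟩ := hW₁
  obtain ⟨-, hW₂0, hW₂rec⟩ := hW₂
  set c₁₂ : ℝ → Fin N → ℝ := fun s => if s ≤ 1 / 2 then c₁ (2 * s) else c₂ (2 * s - 1)
    with hc₁₂def
  -- derivative identity on the left half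
  have hYleft : ∀ t ∈ Set.Ioo (0:ℝ) (1/2), 2 * t ∉ D₁ → ∀ u,
      pathField Γ c₁₂ u t = (2:ℂ) • pathField Γ c₁ u (2 * t) := by
    intro t ht htD u
    rw [hc₁₂def]
    have hc12t : (if t ≤ 1/2 then c₁ (2 * t) else c₂ (2 * t - 1)) = c₁ (2 * t) :=
      if_pos (le_of_lt ht.2)
    have hderiv : ∀ i,
        deriv (fun s => (if s ≤ 1/2 then c₁ (2 * s) else c₂ (2 * s - 1)) i) t
          = 2 * deriv (fun s => c₁ s i) (2 * t) := by
      intro i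
      have hev : (fun s => (if s ≤ 1/2 then c₁ (2 * s) else c₂ (2 * s - 1)) i)
          =ᶠ[nhds t] fun s => c₁ (2 * s) i := by
        filter_upwards [Iio_mem_nhds ht.2] with s hs
        have : s ≤ 1/2 := le_of_lt hs
        simp only [if_pos this]
      rw [hev.deriv_eq]
      have hmem : Set.Icc (0:ℝ) 1 \ D₁ ∈ nhds (2 * t) := by
        rw [mem_nhds_iff]
        exact ⟨Set.Ioo 0 1 \ D₁,
          Set.diff_subset_diff_left Set.Ioo_subset_Icc_self,
          isOpen_Ioo.sdiff hD₁fin.isClosed,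
          ⟨⟨by linarith [ht.1], by linarith [ht.2]⟩, htD⟩⟩
      have hdiff : DifferentiableAt ℝ (fun s => c₁ s i) (2 * t) :=
        (((hc₁.2 i).1.contDiffAt hmem).differentiableAt (by simp))
      have h2 : HasDerivAt (fun s : ℝ => 2 * s) 2 t := by
        simpa using (hasDerivAt_id t).const_mul (2:ℝ)
      have h3 := (hdiff.hasDerivAt.comp t h2).deriv
      rw [show (fun s => c₁ (2 * s) i) = ((fun s => c₁ s i) ∘ HMul.hMul 2) from rfl, h3]
      ring
    simp only [pathField, Finset.smul_sum]
    refine Finset.sum_congr rfl fun i _ => ?_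
    rw [hc12t, hderiv i, smul_smul]
    norm_num
  -- derivative identity on the right half
  have hYright : ∀ t ∈ Set.Ioo (1/2:ℝ) 1, 2 * t - 1 ∉ D₂ → ∀ u,
      pathField Γ c₁₂ u t = (2:ℂ) • pathField Γ c₂ u (2 * t - 1) := by
    intro t ht htD u
    rw [hc₁₂def]
    have hc12t : (if t ≤ 1/2 then c₁ (2 * t) else c₂ (2 * t - 1)) = c₂ (2 * t - 1) :=
      if_neg (not_le.mpr ht.1)
    have hderiv : ∀ i,
        deriv (fun s => (if s ≤ 1/2 then c₁ (2 * s) else c₂ (2 * s - 1)) i) t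
          = 2 * deriv (fun s => c₂ s i) (2 * t - 1) := by
      intro i
      have hev : (fun s => (if s ≤ 1/2 then c₁ (2 * s) else c₂ (2 * s - 1)) i)
          =ᶠ[nhds t] fun s => c₂ (2 * s - 1) i := by
        filter_upwards [Ioi_mem_nhds ht.1] with s hs
        have : ¬ (s ≤ 1/2) := not_le.mpr hs
        simp only [if_neg this]
      rw [hev.deriv_eq]
      have hmem : Set.Icc (0:ℝ) 1 \ D₂ ∈ nhds (2 * t - 1) := by
        rw [mem_nhds_iff]
        exact ⟨Set.Ioo 0 1 \ D₂,
          Set.diff_subset_diff_left Set.Ioo_subset_Icc_self,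
          isOpen_Ioo.sdiff hD₂fin.isClosed,
          ⟨⟨by linarith [ht.1], by linarith [ht.2]⟩, htD⟩⟩
      have hdiff : DifferentiableAt ℝ (fun s => c₂ s i) (2 * t - 1) :=
        (((hc₂.2 i).1.contDiffAt hmem).differentiableAt (by simp))
      have h2 : HasDerivAt (fun s : ℝ => 2 * s - 1) 2 t := by
        simpa using ((hasDerivAt_id t).const_mul (2:ℝ)).sub_const 1
      have h3 := (hdiff.hasDerivAt.comp t h2).deriv
      rw [show (fun s => c₂ (2 * s - 1) i) = ((fun s => c₂ s i) ∘ (fun s => 2 * s - 1))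
        from rfl, h3]
      ring
    simp only [pathField, Finset.smul_sum]
    refine Finset.sum_congr rfl fun i _ => ?_
    rw [hc12t, hderiv i, smul_smul]
    norm_num
  -- the main induction
  have key : ∀ r : ℕ,
      (∀ s ∈ Set.Icc (0:ℝ) (1/2), W₁₂ r s = W₁ r (2 * s)) ∧
      (∀ s ∈ Set.Icc (1/2:ℝ) 1,
        W₁₂ r s = ∑ u ∈ Finset.range (r+1), W₂ u (2*s-1) * W₁ (r-u) 1) := by
    intro r
    induction r using Nat.strong_induction_on with
    | _ r IH =>
    rcases r with - | m
    · constructor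
      · intro s hs
        have hs01 : s ∈ Set.Icc (0:ℝ) 1 := ⟨hs.1, by linarith [hs.2]⟩
        have h2s : 2*s ∈ Set.Icc (0:ℝ) 1 := ⟨by linarith [hs.1], by linarith [hs.2]⟩
        rw [hW₁₂0 s hs01, hW₁0 (2*s) h2s]
      · intro s hs
        have hs01 : s ∈ Set.Icc (0:ℝ) 1 := ⟨by linarith [hs.1], hs.2⟩
        have h2s1 : 2*s-1 ∈ Set.Icc (0:ℝ) 1 := ⟨by linarith [hs.1], by linarith [hs.2]⟩
        rw [hW₁₂0 s hs01, Finset.sum_range_one, hW₂0 (2*s-1) h2s1,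
          hW₁0 1 ⟨by norm_num, le_refl 1⟩]
        simp [onePS]
    · -- inductive step, r = m + 1
      obtain ⟨G, hGprim, hGval⟩ := hW₁₂rec m
      obtain ⟨G₁, hG₁prim, hG₁val⟩ := hW₁rec m
      choose G₂ hG₂prim hG₂val using hW₂rec
      have honep : onePS (m+1) = (0 : 𝒜) := by simp [onePS]
      have honep' : ∀ w, onePS (w+1) = (0 : 𝒜) := fun w => by simp [onePS]
      -- the key integral identity on the left half
      have hhalf : ∀ φ : Module.Dual ℂ 𝒜, ∀ s ∈ Set.Icc (0:ℝ) (1/2),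
          (∫ t in (0:ℝ)..s,
            φ (∑ u ∈ Finset.range (m + 1), pathField Γ c₁₂ u t * W₁₂ (m - u) t))
          = ∫ x in (0:ℝ)..(2*s),
            φ (∑ u ∈ Finset.range (m + 1), pathField Γ c₁ u x * W₁ (m - u) x) := by
        intro φ s hs
        have hcongr : (∫ t in (0:ℝ)..s,
              φ (∑ u ∈ Finset.range (m + 1), pathField Γ c₁₂ u t * W₁₂ (m - u) t))
            = ∫ t in (0:ℝ)..s, (2:ℂ) *
              φ (∑ u ∈ Finset.range (m + 1), pathField Γ c₁ u (2*t) * W₁ (m - u) (2*t)) := by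
          apply intervalIntegral.integral_congr_ae
          have hbad : volume ({(1/2:ℝ)} ∪ (fun x => x / 2) '' D₁) = 0 :=
            ((Set.finite_singleton _).union (hD₁fin.image _)).measure_zero _
          filter_upwards [measure_eq_zero_iff_ae_notMem.mp hbad] with t htbad htI
          rw [Set.uIoc_of_le hs.1] at htI
          have ht2 : t < 1/2 := by
            rcases lt_or_eq_of_le (le_trans htI.2 hs.2) with h | h
            · exact h
            · exact absurd (Set.mem_union_left _ (by simp [h])) htbad
          have htD : 2 * t ∉ D₁ := by
            intro hmem
            exact htbad (Set.mem_union_right _ ⟨2*t, hmem, by ring⟩)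
          have hIoo : t ∈ Set.Ioo (0:ℝ) (1/2) := ⟨htI.1, ht2⟩
          have htIcc : t ∈ Set.Icc (0:ℝ) (1/2) := ⟨le_of_lt htI.1, le_of_lt ht2⟩
          have hsum : (∑ u ∈ Finset.range (m + 1), pathField Γ c₁₂ u t * W₁₂ (m - u) t)
              = (2:ℂ) • ∑ u ∈ Finset.range (m + 1),
                  pathField Γ c₁ u (2*t) * W₁ (m - u) (2*t) := by
            rw [Finset.smul_sum]
            refine Finset.sum_congr rfl fun u hu => ?_
            rw [hYleft t hIoo htD u, (IH (m - u) (by omega)).1 t htIcc, smul_mul_assoc]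
          rw [hsum, _root_.map_smul, smul_eq_mul]
        rw [hcongr, intervalIntegral.integral_const_mul]
        have hcv := intervalIntegral.smul_integral_comp_mul_left
          (fun x => φ (∑ u ∈ Finset.range (m + 1), pathField Γ c₁ u x * W₁ (m - u) x))
          (a := 0) (b := s) 2
        rw [mul_zero] at hcv
        rw [← hcv, Complex.real_smul]
        norm_num
      -- claim 1 : on the left half
      have claim1 : ∀ s ∈ Set.Icc (0:ℝ) (1/2), W₁₂ (m+1) s = W₁ (m+1) (2*s) := by
        intro s hs
        have hs01 : s ∈ Set.Icc (0:ℝ) 1 := ⟨hs.1, by linarith [hs.2]⟩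
        have h2s : 2*s ∈ Set.Icc (0:ℝ) 1 := ⟨by linarith [hs.1], by linarith [hs.2]⟩
        apply aux_sep; intro φ
        rw [hGval s hs01, hG₁val (2*s) h2s, honep, zero_add, zero_add,
          (aux_lemA hGprim φ hs01).2, (aux_lemA hG₁prim φ h2s).2]
        exact hhalf φ s hs
      -- claim 2 : on the right half
      have claim2 : ∀ s ∈ Set.Icc (1/2:ℝ) 1,
          W₁₂ (m+1) s = ∑ u ∈ Finset.range (m+2), W₂ u (2*s-1) * W₁ (m+1-u) 1 := by
        intro s hs
        have hs01 : s ∈ Set.Icc (0:ℝ) 1 := ⟨by linarith [hs.1], hs.2⟩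
        have h2s1 : 2*s-1 ∈ Set.Icc (0:ℝ) 1 := ⟨by linarith [hs.1], by linarith [hs.2]⟩
        have hhIcc : (1/2:ℝ) ∈ Set.Icc (0:ℝ) 1 := ⟨by norm_num, by norm_num⟩
        have h1Icc : (1:ℝ) ∈ Set.Icc (0:ℝ) 1 := ⟨by norm_num, le_refl 1⟩
        apply aux_sep; intro φ
        rw [hGval s hs01, honep, zero_add, (aux_lemA hGprim φ hs01).2]
        -- split the integral at 1/2
        have hint_s := (aux_lemA hGprim φ hs01).1
        have hint_h := (aux_lemA hGprim φ hhIcc).1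
        rw [← intervalIntegral.integral_add_adjacent_intervals hint_h
          (hint_h.symm.trans hint_s)]
        -- first piece
        have hfirst : (∫ t in (0:ℝ)..(1/2),
              φ (∑ u ∈ Finset.range (m + 1), pathField Γ c₁₂ u t * W₁₂ (m - u) t))
            = φ (W₁ (m+1) 1) := by
          have h21 : (2:ℝ) * (1/2) = 1 := by norm_num
          have := hhalf φ (1/2) ⟨by norm_num, le_refl _⟩
          rw [h21] at this
          rw [this, ← (aux_lemA hG₁prim φ h1Icc).2, hG₁val 1 h1Icc, honep, zero_add]
        -- the `q` function
        set q : ℝ → ℂ := fun x => ∑ w ∈ Finset.range (m+1),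
          φ ((∑ u ∈ Finset.range (w + 1), pathField Γ c₂ u x * W₂ (w - u) x)
            * W₁ (m - w) 1) with hqdef
        -- second piece : congruence a.e.
        have hsecond : (∫ t in (1/2:ℝ)..s,
              φ (∑ u ∈ Finset.range (m + 1), pathField Γ c₁₂ u t * W₁₂ (m - u) t))
            = ∫ t in (1/2:ℝ)..s, (2:ℂ) * q (2*t-1) := by
          apply intervalIntegral.integral_congr_ae
          have hbad : volume ({(1:ℝ)} ∪ (fun x => (x+1) / 2) '' D₂) = 0 :=
            ((Set.finite_singleton _).union (hD₂fin.image _)).measure_zero _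
          filter_upwards [measure_eq_zero_iff_ae_notMem.mp hbad] with t htbad htI
          rw [Set.uIoc_of_le hs.1] at htI
          have ht2 : t < 1 := by
            rcases lt_or_eq_of_le (le_trans htI.2 hs.2) with h | h
            · exact h
            · exact absurd (Set.mem_union_left _ (by simp [h])) htbad
          have htD : 2 * t - 1 ∉ D₂ := by
            intro hmem
            exact htbad (Set.mem_union_right _ ⟨2*t-1, hmem, by ring⟩)
          have hIoo : t ∈ Set.Ioo (1/2:ℝ) 1 := ⟨htI.1, ht2⟩
          have htIcc : t ∈ Set.Icc (1/2:ℝ) 1 := ⟨le_of_lt htI.1, le_of_lt ht2⟩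
          have hsum : (∑ u ∈ Finset.range (m + 1), pathField Γ c₁₂ u t * W₁₂ (m - u) t)
              = (2:ℂ) • ∑ u ∈ Finset.range (m + 1), ∑ v ∈ Finset.range (m - u + 1),
                  pathField Γ c₂ u (2*t-1) * W₂ v (2*t-1) * W₁ (m - u - v) 1 := by
            rw [Finset.smul_sum]
            refine Finset.sum_congr rfl fun u hu => ?_
            rw [hYright t hIoo htD u, (IH (m - u) (by omega)).2 t htIcc,
              smul_mul_assoc, Finset.mul_sum]
            congr 1
            exact Finset.sum_congr rfl fun v hv => (mul_assoc _ _ _).symm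
          rw [hsum, _root_.map_smul, smul_eq_mul]
          congr 1
          have hre : ∀ u ∈ Finset.range (m+1),
              (∑ v ∈ Finset.range (m - u + 1),
                φ (pathField Γ c₂ u (2*t-1) * W₂ v (2*t-1) * W₁ (m - u - v) 1))
              = ∑ v ∈ Finset.range (m + 1 - u),
                φ (pathField Γ c₂ u (2*t-1) * W₂ v (2*t-1) * W₁ (m - u - v) 1) := by
            intro u hu
            have : m - u + 1 = m + 1 - u := by
              have := Finset.mem_range.mp hu; omega
            rw [this]
          rw [_root_.map_sum]
          simp only [_root_.map_sum]
          rw [Finset.sum_congr rfl hre,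
            aux_tri m (fun u v => φ (pathField Γ c₂ u (2*t-1) * W₂ v (2*t-1)
              * W₁ (m - u - v) 1)), hqdef]
          refine Finset.sum_congr rfl fun w hw => ?_
          rw [Finset.sum_mul, _root_.map_sum]
          refine Finset.sum_congr rfl fun u hu => ?_
          have h1 : m - u - (w - u) = m - w := by
            have := Finset.mem_range.mp hu; omega
          rw [h1]
        rw [hfirst, hsecond, intervalIntegral.integral_const_mul]
        -- change of variables for q
        have hcv := intervalIntegral.integral_comp_mul_sub q two_ne_zero 1
          (a := (1/2:ℝ)) (b := s)
        have hb : (2:ℝ)*(1/2)-1 = 0 := by norm_num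
        rw [hb] at hcv
        rw [hcv, Complex.real_smul]
        have h2q : (2:ℂ) * (((2:ℝ)⁻¹ : ℝ) : ℂ) * (∫ x in (0:ℝ)..(2*s-1), q x)
            = ∫ x in (0:ℝ)..(2*s-1), q x := by
          push_cast; ring
        rw [← mul_assoc, h2q]
        -- evaluate the q-integral
        have hqint : (∫ x in (0:ℝ)..(2*s-1), q x)
            = ∑ w ∈ Finset.range (m+1), φ (W₂ (w+1) (2*s-1) * W₁ (m - w) 1) := by
          have hψ : ∀ w : ℕ, ∃ ψ : Module.Dual ℂ 𝒜,
              (∀ x : 𝒜, ψ x = φ (x * W₁ (m - w) 1)) := by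
            intro w
            exact ⟨φ.comp (LinearMap.mulRight ℂ (W₁ (m - w) 1)), fun x => rfl⟩
          choose ψ hψval using hψ
          have hq' : ∀ x, q x = ∑ w ∈ Finset.range (m+1),
              ψ w (∑ u ∈ Finset.range (w + 1), pathField Γ c₂ u x * W₂ (w - u) x) := by
            intro x
            rw [hqdef]
            exact Finset.sum_congr rfl fun w _ => (hψval w _).symm
          simp only [hq']
          rw [intervalIntegral.integral_finset_sum
            (fun w _ => (aux_lemA (hG₂prim w) (ψ w) h2s1).1)]
          refine Finset.sum_congr rfl fun w hw => ?_
          rw [← (aux_lemA (hG₂prim w) (ψ w) h2s1).2, hψval w,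
            hG₂val w (2*s-1) h2s1, honep' w, zero_add]
        rw [hqint]
        -- assemble
        rw [_root_.map_sum]
        have hW₂zero : W₂ 0 (2*s-1) = 1 := by
          rw [hW₂0 (2*s-1) h2s1]; rfl
        conv_rhs => rw [Finset.sum_range_succ']
        simp only [Nat.succ_sub_succ_eq_sub, Nat.sub_zero]
        rw [hW₂zero, one_mul, add_comm]
      exact ⟨claim1, claim2⟩
  -- conclusion
  ext r
  rw [PowerSeries.coeff_mul]
  simp only [seriesAt, PowerSeries.coeff_mk]
  rw [Finset.Nat.sum_antidiagonal_eq_sum_range_succ_mk]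
  have h1 := (key r).2 1 ⟨by norm_num, le_refl 1⟩
  norm_num at h1
  rw [h1]
end

section
/- For every integer n ≥ 2, the Knizhnik–Zamolodchikov connection ⁽ⁿ⁾Γ_{KZ}(z_1,…,z_n) = Σ_{1≤i<j≤n} (A_{ij}/(z_i−z_j)) (dz_i − dz_j) on the ordered configuration space Y_n is (formally) flat, i.e. ∂Γ_i/∂z_j − ∂Γ_j/∂z_i + λ(Γ_iΓ_j − Γ_jΓ_i) = 0 for all 1 ≤ i,j ≤ n. -/
open Set

universe u

section

variable {𝒜 : Type u} [Ring 𝒜] [Algebra ℂ 𝒜] {n : ℕ}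

/-- The ordered configuration space `Y_n ⊆ ℂ^n`. -/
def configSpace (n : ℕ) : Set (Fin n → ℂ) :=
  {z | ∀ i j : Fin n, i ≠ j → z i ≠ z j}

/-- `h = ∂g/∂z_j` on `U`, computed through a finite tensor representation of `g` by
complex-differentiable functions. -/
def CPartialOf (U : Set (Fin n → ℂ)) (g : (Fin n → ℂ) → 𝒜) (j : Fin n)
    (h : (Fin n → ℂ) → 𝒜) : Prop :=
  ∃ (m : ℕ) (f : Fin m → (Fin n → ℂ) → ℂ) (v : Fin m → 𝒜),
    (∀ k, DifferentiableOn ℂ (f k) U) ∧ (∀ z, g z = ∑ k, f k z • v k) ∧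
    ∀ z ∈ U, h z = ∑ k, (fderiv ℂ (f k) z (Pi.single j 1)) • v k

/-- The `i`-th component of the Knizhnik–Zamolodchikov connection
`⁽ⁿ⁾Γ_KZ = Σ_{i<j} (A_{ij}/(z_i−z_j))(dz_i − dz_j)`, i.e. the coefficient of `dz_i`:
`Γ_i(z) = Σ_{j≠i} A_{ij}/(z_i − z_j)`. -/
noncomputable def kzConn (A : Fin n → Fin n → 𝒜) (i : Fin n) (z : Fin n → ℂ) : 𝒜 :=
  ∑ j ∈ Finset.univ.erase i, ((z i - z j)⁻¹ : ℂ) • A i j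

end

/-!
Since `∂Γ_i/∂z_j = A_ij/(z_i - z_j)²` for `i ≠ j` is symmetric in `i, j`, flatness reduces to
`[Γ_i, Γ_j] = 0`. Expanding the bracket, the terms `[A_ik, A_jl]` with `{i,k} ∩ {j,l} = ∅`
vanish by the four-term relation, and for each `m ∉ {i,j}` the three-term relations turn the
remaining terms into one multiple of `[A_ij, A_jm]`, whose coefficient is the Arnold combination
of `1/(z_i - z_j)`, `1/(z_j - z_m)`, `1/(z_m - z_i)` and so vanishes.
-/

open Finset

theorem arnold_relation {𝕜 : Type*} [Field 𝕜] {a b c : 𝕜} (hab : a ≠ b) (hbc : b ≠ c)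
    (hac : a ≠ c) :
    (a - b)⁻¹ * (b - c)⁻¹ + (a - c)⁻¹ * (b - a)⁻¹ - (a - c)⁻¹ * (b - c)⁻¹ = 0 := by
  have hab' := sub_ne_zero.2 hab
  have hbc' := sub_ne_zero.2 hbc
  have hac' := sub_ne_zero.2 hac
  field_simp
  ring

theorem CPartialOf.of_hasFDerivAt {𝒜 : Type*} [Ring 𝒜] [Algebra ℂ 𝒜] {n m : ℕ}
    {U : Set (Fin n → ℂ)} {g h : (Fin n → ℂ) → 𝒜} {j : Fin n} {f : Fin m → (Fin n → ℂ) → ℂ}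
    {f' : Fin m → (Fin n → ℂ) → (Fin n → ℂ) →L[ℂ] ℂ} {v : Fin m → 𝒜}
    (hf : ∀ k, ∀ z ∈ U, HasFDerivAt (f k) (f' k z) z) (hg : ∀ z, g z = ∑ k, f k z • v k)
    (hh : ∀ z ∈ U, h z = ∑ k, f' k z (Pi.single j 1) • v k) :
    CPartialOf U g j h := by
  refine ⟨m, f, v, fun k z hz => (hf k z hz).differentiableAt.differentiableWithinAt, hg,
    fun z hz => ?_⟩
  rw [hh z hz]
  exact sum_congr rfl fun k _ => by rw [(hf k z hz).fderiv]

theorem hasFDerivAt_inv_sub_apply {n : ℕ} {i k : Fin n} {z : Fin n → ℂ} (h : z i ≠ z k) :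
    HasFDerivAt (fun w : Fin n → ℂ => (w i - w k)⁻¹)
      ((-((z i - z k) ^ 2)⁻¹) •
        (ContinuousLinearMap.proj (R := ℂ) (φ := fun _ => ℂ) i - ContinuousLinearMap.proj k)) z :=
  (hasDerivAt_inv (sub_ne_zero.2 h)).comp_hasFDerivAt z
    ((hasFDerivAt_apply i z).sub (hasFDerivAt_apply k z))

/-- For `k = i` both the function and the derivative are zero, because `(0 : ℂ)⁻¹ = 0`. -/
theorem hasFDerivAt_inv_sub_apply_of_mem_configSpace {n : ℕ} {z : Fin n → ℂ}
    (hz : z ∈ configSpace n) (i k : Fin n) :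
    HasFDerivAt (fun w : Fin n → ℂ => (w i - w k)⁻¹)
      ((-((z i - z k) ^ 2)⁻¹) •
        (ContinuousLinearMap.proj (R := ℂ) (φ := fun _ => ℂ) i - ContinuousLinearMap.proj k)) z := by
  rcases eq_or_ne i k with rfl | hik
  · simpa only [sub_self, inv_zero, smul_zero] using hasFDerivAt_const (𝕜 := ℂ) (0 : ℂ) z
  · exact hasFDerivAt_inv_sub_apply (hz i k hik)

section KZ

attribute [local instance] LieRing.ofAssociativeRing

variable {𝒜 : Type*} [Ring 𝒜] [Algebra ℂ 𝒜] {n : ℕ} {A : Fin n → Fin n → 𝒜}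

/-- The added term `k = i` vanishes because `(0 : ℂ)⁻¹ = 0`. -/
theorem kzConn_eq_sum (A : Fin n → Fin n → 𝒜) (i : Fin n) (z : Fin n → ℂ) :
    kzConn A i z = ∑ k, (z i - z k)⁻¹ • A i k :=
  sum_erase _ (by simp)

/-- `∂Γ_i/∂z_j`. -/
noncomputable def kzConnPartial (A : Fin n → Fin n → 𝒜) (j i : Fin n) (z : Fin n → ℂ) : 𝒜 :=
  ∑ k, (-((z i - z k) ^ 2)⁻¹ *
    ((Pi.single j 1 : Fin n → ℂ) i - (Pi.single j 1 : Fin n → ℂ) k)) • A i k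

theorem cPartialOf_kzConn (A : Fin n → Fin n → 𝒜) (i j : Fin n) :
    CPartialOf (configSpace n) (kzConn A i) j (kzConnPartial A j i) :=
  CPartialOf.of_hasFDerivAt (fun k _ hz => hasFDerivAt_inv_sub_apply_of_mem_configSpace hz i k)
    (kzConn_eq_sum A i) fun z _ => by simp [kzConnPartial]

theorem kzConnPartial_of_ne (A : Fin n → Fin n → 𝒜) {i j : Fin n} (hji : j ≠ i)
    (z : Fin n → ℂ) : kzConnPartial A j i z = ((z i - z j) ^ 2)⁻¹ • A i j := by
  rw [kzConnPartial, Fintype.sum_eq_single j fun k hkj => ?_]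
  · simp [Pi.single_eq_of_ne hji.symm]
  · simp [Pi.single_eq_of_ne hji.symm, Pi.single_eq_of_ne hkj]

theorem kzConnPartial_comm (hsym : ∀ i j : Fin n, A i j = A j i) (i j : Fin n)
    (z : Fin n → ℂ) : kzConnPartial A j i z = kzConnPartial A i j z := by
  rcases eq_or_ne j i with rfl | hji
  · rfl
  · rw [kzConnPartial_of_ne A hji, kzConnPartial_of_ne A hji.symm, hsym, ← neg_sub (z i),
      neg_sq]

noncomputable def kzLieTerm (A : Fin n → Fin n → 𝒜) (z : Fin n → ℂ) (i j k l : Fin n) : 𝒜 :=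
  ((z i - z k)⁻¹ * (z j - z l)⁻¹) • ⁅A i k, A j l⁆

theorem lie_kzConn_eq_sum (A : Fin n → Fin n → 𝒜) (z : Fin n → ℂ) (i j : Fin n) :
    ⁅kzConn A i z, kzConn A j z⁆ = ∑ k, ∑ l, kzLieTerm A z i j k l := by
  rw [kzConn_eq_sum, kzConn_eq_sum, sum_lie]
  simp only [lie_sum, smul_lie, lie_smul, smul_smul, kzLieTerm, mul_comm]

theorem kzLieTerm_self_left (A : Fin n → Fin n → 𝒜) (z : Fin n → ℂ) (i j l : Fin n) :
    kzLieTerm A z i j i l = 0 := by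
  simp [kzLieTerm]

theorem kzLieTerm_self_right (A : Fin n → Fin n → 𝒜) (z : Fin n → ℂ) (i j k : Fin n) :
    kzLieTerm A z i j k j = 0 := by
  simp [kzLieTerm]

theorem kzLieTerm_swap (hsym : ∀ i j : Fin n, A i j = A j i) (z : Fin n → ℂ) (i j : Fin n) :
    kzLieTerm A z i j j i = 0 := by
  simp [kzLieTerm, hsym j i]

theorem sum_kzLieTerm_of_ne
    (hbraid₄ : ∀ i j k l : Fin n, i ≠ j → i ≠ k → i ≠ l → j ≠ k → j ≠ l → k ≠ l →
      Commute (A i j) (A k l))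
    (z : Fin n → ℂ) {i j k : Fin n} (hij : i ≠ j) (hkj : k ≠ j) :
    ∑ l, kzLieTerm A z i j k l = kzLieTerm A z i j k i + kzLieTerm A z i j k k := by
  rcases eq_or_ne k i with rfl | hki
  · simp [kzLieTerm_self_left]
  refine Fintype.sum_eq_add i k hki.symm fun l ⟨hli, hlk⟩ => ?_
  rcases eq_or_ne l j with rfl | hlj
  · exact kzLieTerm_self_right A z i l k
  · rw [kzLieTerm, commute_iff_lie_eq.1 (hbraid₄ i k j l hki.symm hij hli.symm hkj hlk.symm
      hlj.symm), smul_zero]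

theorem kzLieTerm_add_add_eq_zero (hsym : ∀ i j : Fin n, A i j = A j i)
    (hbraid₃ : ∀ i j k : Fin n, i ≠ j → i ≠ k → j ≠ k → Commute (A i j + A i k) (A j k))
    {z : Fin n → ℂ} (hz : z ∈ configSpace n) {i j : Fin n} (hij : i ≠ j) (m : Fin n) :
    kzLieTerm A z i j j m + kzLieTerm A z i j m i + kzLieTerm A z i j m m = 0 := by
  rcases eq_or_ne m i with rfl | hmi
  · simp [kzLieTerm_swap hsym, kzLieTerm_self_left]
  rcases eq_or_ne m j with rfl | hmj
  · simp [kzLieTerm_swap hsym, kzLieTerm_self_right]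
  have hjm : ⁅A i m, A j m⁆ = -⁅A i j, A j m⁆ := by
    rw [eq_neg_iff_add_eq_zero, add_comm, ← add_lie]
    exact commute_iff_lie_eq.1 (hbraid₃ i j m hij hmi.symm hmj.symm)
  have hmi' : ⁅A i m, A j i⁆ = ⁅A i j, A j m⁆ := by
    have h := commute_iff_lie_eq.1 (hbraid₃ m i j hmi hmj hij)
    rw [add_lie, add_eq_zero_iff_eq_neg] at h
    rw [hsym j i, hsym i m, h, lie_skew, hsym m j]
  simp only [kzLieTerm, hjm, hmi', smul_neg, ← sub_eq_add_neg, ← add_smul, ← sub_smul,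
    arnold_relation (hz i j hij) (hz j m hmj.symm) (hz i m hmi.symm), zero_smul]

theorem lie_kzConn_eq_zero (hsym : ∀ i j : Fin n, A i j = A j i)
    (hbraid₃ : ∀ i j k : Fin n, i ≠ j → i ≠ k → j ≠ k → Commute (A i j + A i k) (A j k))
    (hbraid₄ : ∀ i j k l : Fin n, i ≠ j → i ≠ k → i ≠ l → j ≠ k → j ≠ l → k ≠ l →
      Commute (A i j) (A k l))
    {z : Fin n → ℂ} (hz : z ∈ configSpace n) (i j : Fin n) :
    ⁅kzConn A i z, kzConn A j z⁆ = 0 := by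
  rcases eq_or_ne i j with rfl | hij
  · exact lie_self _
  set T := kzLieTerm A z i j
  have hrow : ∀ k, ∑ l, T k l = T k i + T k k + if k = j then ∑ l, T j l else 0 := by
    intro k
    rcases eq_or_ne k j with rfl | hkj
    · simp [T, kzLieTerm_swap hsym, kzLieTerm_self_right]
    · rw [if_neg hkj, add_zero, sum_kzLieTerm_of_ne hbraid₄ z hij hkj]
  calc ⁅kzConn A i z, kzConn A j z⁆ = ∑ k, ∑ l, T k l := lie_kzConn_eq_sum A z i j
    _ = ∑ m, (T j m + T m i + T m m) := by
      rw [sum_congr rfl fun k _ => hrow k]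
      simp only [sum_add_distrib, sum_ite_eq', Finset.mem_univ, if_true]
      abel
    _ = 0 := sum_eq_zero fun m _ => kzLieTerm_add_add_eq_zero hsym hbraid₃ hz hij m

end KZ

theorem statement14_general {𝒜 : Type u} [Ring 𝒜] [Algebra ℂ 𝒜]
    (n : ℕ) (A : Fin n → Fin n → 𝒜)
    (hsym : ∀ i j : Fin n, A i j = A j i)
    (hbraid₃ : ∀ i j k : Fin n, i ≠ j → i ≠ k → j ≠ k →
      Commute (A i j + A i k) (A j k))
    (hbraid₄ : ∀ i j k l : Fin n, i ≠ j → i ≠ k → i ≠ l → j ≠ k → j ≠ l → k ≠ l →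
      Commute (A i j) (A k l)) :
    ∃ dΓ : Fin n → Fin n → (Fin n → ℂ) → 𝒜,
      (∀ j i : Fin n, CPartialOf (configSpace n) (kzConn A i) j (dΓ j i)) ∧
      ∀ i j : Fin n, ∀ z ∈ configSpace n,
        (PowerSeries.C (R := 𝒜)) (dΓ j i z - dΓ i j z) +
          PowerSeries.X *
            (PowerSeries.C (R := 𝒜)) (kzConn A i z * kzConn A j z - kzConn A j z * kzConn A i z)
          = 0 := by
  refine ⟨kzConnPartial A, fun j i => cPartialOf_kzConn A i j, fun i j z hz => ?_⟩
  rw [kzConnPartial_comm hsym, sub_self, ← Ring.lie_def,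
    lie_kzConn_eq_zero hsym hbraid₃ hbraid₄ hz]
  simp

/-- For every `n ≥ 2`, if the elements `A_{ij} = A_{ji}` satisfy the
infinitesimal braid relations, then the Knizhnik–Zamolodchikov connection on `Y_n` is
formally flat: `∂Γ_i/∂z_j − ∂Γ_j/∂z_i + λ(Γ_iΓ_j − Γ_jΓ_i) = 0` for all `i, j`. -/
theorem statement14 {𝒜 : Type u} [Ring 𝒜] [Algebra ℂ 𝒜]
    (n : ℕ) (hn : 2 ≤ n) (A : Fin n → Fin n → 𝒜)
    (hsym : ∀ i j : Fin n, A i j = A j i)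
    (hbraid₃ : ∀ i j k : Fin n, i ≠ j → i ≠ k → j ≠ k →
      Commute (A i j + A i k) (A j k))
    (hbraid₄ : ∀ i j k l : Fin n, i ≠ j → i ≠ k → i ≠ l → j ≠ k → j ≠ l → k ≠ l →
      Commute (A i j) (A k l)) :
    ∃ dΓ : Fin n → Fin n → (Fin n → ℂ) → 𝒜,
      (∀ j i : Fin n, CPartialOf (configSpace n) (kzConn A i) j (dΓ j i)) ∧
      ∀ i j : Fin n, ∀ z ∈ configSpace n,
        (PowerSeries.C (R := 𝒜)) (dΓ j i z - dΓ i j z) +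
          PowerSeries.X *
            (PowerSeries.C (R := 𝒜)) (kzConn A i z * kzConn A j z - kzConn A j z * kzConn A i z)
          = 0 :=
  statement14_general n A hsym hbraid₃ hbraid₄
end
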